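/- arXiv:1204.3346 — 2 statements merged into one kernel-verified Lean document; each statement's English description precedes it below -/
import Mathlib

section
/- A finite poset x with |x| ≥ 2 is a pure matter causet (a product of the 2-element antichain but not of the 2-element chain) if and only if x has at least two minimal vertices and no minimal vertex of x has a single-parent child. -/
/-- A causet: a finite partial order on a finite set of labels. -/
structure Causet where
  carrier : Finset ℕ
  rel : ℕ → ℕ → Prop
  rel_mem : ∀ a b, rel a b → a ∈ carrier ∧ b ∈ carrier
  irrefl : ∀ a, ¬ rel a a
  trans : ∀ a b c, rel a b → rel b c → rel a c

namespace Causet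

/-- A minimal vertex. -/
def Minimal (x : Causet) (a : ℕ) : Prop :=
  a ∈ x.carrier ∧ ∀ b, ¬ x.rel b a

/-- A maximal vertex. -/
def Maximal (x : Causet) (a : ℕ) : Prop :=
  a ∈ x.carrier ∧ ∀ b, ¬ x.rel a b

/-- `a` is a parent of `b` (a lower cover). -/
def Parent (x : Causet) (a b : ℕ) : Prop :=
  x.rel a b ∧ ∀ c, ¬ (x.rel a c ∧ x.rel c b)

/-- `y` is obtained from `x` by adjoining the single new element `a`, maximal in `y`. -/
def ProducesWith (x y : Causet) (a : ℕ) : Prop :=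
  a ∉ x.carrier ∧ y.carrier = insert a x.carrier ∧ y.Maximal a ∧
    ∀ u v, u ∈ x.carrier → v ∈ x.carrier → (y.rel u v ↔ x.rel u v)

/-- `x → y`: `y` is obtained from `x` by adjoining a single maximal element. -/
def Produces (x y : Causet) : Prop := ∃ a, ProducesWith x y a

/-- `y` is a product of `x`: `y = x` or there is a chain of productions from `x` to `y`. -/
def ProductOf (x y : Causet) : Prop := Relation.ReflTransGen Produces x y

/-- `x` is (a copy of) the 2-element chain. -/
def IsTwoChain (x : Causet) : Prop :=
  ∃ a b, a ≠ b ∧ x.carrier = {a, b} ∧ x.rel a b ∧ ∀ u v, x.rel u v → u = a ∧ v = b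

/-- `x` is (a copy of) the 2-element antichain. -/
def IsTwoAntichain (x : Causet) : Prop :=
  ∃ a b, a ≠ b ∧ x.carrier = {a, b} ∧ ∀ u v, ¬ x.rel u v

/-- `x` has at least two minimal vertices. -/
def TwoMinimal (x : Causet) : Prop :=
  ∃ a b, a ≠ b ∧ x.Minimal a ∧ x.Minimal b

/-- The minimal vertex `a` has a single-parent child (a child whose unique parent is `a`). -/
def MinWithSPC (x : Causet) (a : ℕ) : Prop :=
  x.Minimal a ∧ ∃ c, x.Parent a c ∧ ∀ d, x.Parent d c → d = a

/-- `x` is mixed: at least two minimal vertices, at least one of which has a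
single-parent child. -/
def Mixed (x : Causet) : Prop :=
  TwoMinimal x ∧ ∃ a, MinWithSPC x a

end Causet

/-! Products of `z` are exactly the causets having `z` as a stem (a down-closed induced
subcauset): each production keeps the old causet down-closed, and conversely a stem grows to
the whole causet by adjoining the missing elements one maximal element at a time.
A 2-antichain is a stem exactly when both of its points are minimal. A 2-chain `a < c` is a stem
exactly when `a` is minimal and nothing else lies below `c`; since everything below `c` lies
below some parent of `c`, this says that `c` is a single-parent child of the minimal vertex `a`. -/

namespace Causet

instance (x : Causet) : IsStrictOrder ℕ x.rel where
  irrefl := x.irrefl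
  trans := x.trans

theorem ext {z x : Causet} (hc : z.carrier = x.carrier) (hr : ∀ u v, z.rel u v ↔ x.rel u v) :
    z = x := by
  obtain ⟨c, r, _, _, _⟩ := z
  obtain ⟨c', r', _, _, _⟩ := x
  obtain rfl : c = c' := hc
  obtain rfl : r = r' := funext₂ fun u v => propext (hr u v)
  rfl

theorem wellFounded_of_isStrictOrder (x : Causet) (r : ℕ → ℕ → Prop) [IsStrictOrder ℕ r]
    (hr : ∀ u v, r u v → u ∈ x.carrier ∧ v ∈ x.carrier) : WellFounded r :=
  (Set.wellFoundedOn_iff.1 (x.carrier.finite_toSet.wellFoundedOn (r := r))).mono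
    fun u v h => ⟨h, hr u v h⟩

theorem exists_maximal_of_nonempty (x : Causet) {s : Set ℕ} (hs : s.Nonempty) :
    ∃ a ∈ s, ∀ b ∈ s, ¬ x.rel a b :=
  (x.wellFounded_of_isStrictOrder (Function.swap x.rel)
    fun u v h => (x.rel_mem v u h).symm).has_min s hs

theorem exists_parent_of_rel {x : Causet} {v c : ℕ} (h : x.rel v c) :
    ∃ d, x.Parent d c ∧ (v = d ∨ x.rel v d) := by
  obtain ⟨d, ⟨hvd, hdc⟩, hmax⟩ :=
    x.exists_maximal_of_nonempty (s := {w | (v = w ∨ x.rel v w) ∧ x.rel w c})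
      ⟨v, Or.inl rfl, h⟩
  refine ⟨d, ⟨hdc, fun e ⟨hde, hec⟩ => hmax e ⟨Or.inr ?_, hec⟩ hde⟩, hvd⟩
  rcases hvd with rfl | hvd
  exacts [hde, x.trans _ _ _ hvd hde]

def restrict (x : Causet) (s : Finset ℕ) : Causet where
  carrier := s
  rel u v := x.rel u v ∧ u ∈ s ∧ v ∈ s
  rel_mem _ _ h := h.2
  irrefl u h := x.irrefl u h.1
  trans _ _ _ h₁ h₂ := ⟨x.trans _ _ _ h₁.1 h₂.1, h₁.2.1, h₂.2.2⟩

structure IsStem (z x : Causet) : Prop where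
  carrier_subset : z.carrier ⊆ x.carrier
  rel_iff : ∀ u ∈ z.carrier, ∀ v ∈ z.carrier, z.rel u v ↔ x.rel u v
  mem_of_rel : ∀ u ∈ z.carrier, ∀ v, x.rel v u → v ∈ z.carrier

namespace IsStem

variable {z y x : Causet}

theorem refl (x : Causet) : x.IsStem x :=
  ⟨subset_rfl, fun _ _ _ _ => Iff.rfl, fun _ _ _ h => (x.rel_mem _ _ h).1⟩

theorem trans (hzy : z.IsStem y) (hyx : y.IsStem x) : z.IsStem x where
  carrier_subset := hzy.carrier_subset.trans hyx.carrier_subset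
  rel_iff u hu v hv := (hzy.rel_iff u hu v hv).trans
    (hyx.rel_iff u (hzy.carrier_subset hu) v (hzy.carrier_subset hv))
  mem_of_rel u hu v h := hzy.mem_of_rel u hu v <|
    (hyx.rel_iff v (hyx.mem_of_rel _ (hzy.carrier_subset hu) v h) u (hzy.carrier_subset hu)).2 h

theorem rel_iff_right (h : z.IsStem x) {u : ℕ} (hu : u ∈ z.carrier) (v : ℕ) :
    z.rel v u ↔ x.rel v u :=
  ⟨fun hvu => (h.rel_iff v (z.rel_mem v u hvu).1 u hu).1 hvu,
    fun hvu => (h.rel_iff v (h.mem_of_rel u hu v hvu) u hu).2 hvu⟩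

theorem minimal (h : z.IsStem x) {u : ℕ} (hu : z.Minimal u) : x.Minimal u :=
  ⟨h.carrier_subset hu.1, fun v => (h.rel_iff_right hu.1 v).not.1 (hu.2 v)⟩

theorem eq_of_carrier_subset (h : z.IsStem x) (hxz : x.carrier ⊆ z.carrier) : z = x := by
  refine ext (h.carrier_subset.antisymm hxz) fun u v => ⟨fun huv => ?_, fun huv => ?_⟩
  · obtain ⟨hu, hv⟩ := z.rel_mem u v huv
    exact (h.rel_iff u hu v hv).1 huv
  · obtain ⟨hu, hv⟩ := x.rel_mem u v huv
    exact (h.rel_iff u (hxz hu) v (hxz hv)).2 huv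

theorem restrict (h : z.IsStem x) {s : Finset ℕ} (hzs : z.carrier ⊆ s) :
    z.IsStem (x.restrict s) where
  carrier_subset := hzs
  rel_iff u hu v hv :=
    (h.rel_iff u hu v hv).trans ⟨fun huv => ⟨huv, hzs hu, hzs hv⟩, And.left⟩
  mem_of_rel u hu v hvu := h.mem_of_rel u hu v hvu.1

end IsStem

theorem isStem_restrict {x : Causet} {s : Finset ℕ} (hsx : s ⊆ x.carrier)
    (hs : ∀ u ∈ s, ∀ v, x.rel v u → v ∈ s) : (x.restrict s).IsStem x where
  carrier_subset := hsx
  rel_iff _ hu _ hv := ⟨And.left, fun huv => ⟨huv, hu, hv⟩⟩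
  mem_of_rel := hs

theorem ProducesWith.isStem {y x : Causet} {a : ℕ} (h : ProducesWith y x a) : y.IsStem x where
  carrier_subset := h.2.1 ▸ Finset.subset_insert a y.carrier
  rel_iff u hu v hv := (h.2.2.2 u v hu hv).symm
  mem_of_rel u hu v hvu := by
    have hv : v ∈ insert a y.carrier := h.2.1 ▸ (x.rel_mem v u hvu).1
    rcases Finset.mem_insert.1 hv with rfl | hv
    · exact absurd hvu (h.2.2.1.2 u)
    · exact y.rel_mem v u ((h.2.2.2 v u hv hu).1 hvu) |>.1

theorem ProductOf.isStem {z x : Causet} (h : z.ProductOf x) : z.IsStem x := by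
  induction h with
  | refl => exact IsStem.refl z
  | tail _ hyx ih => exact ih.trans (hyx.choose_spec.isStem)

theorem producesWith_restrict_erase {x : Causet} {a : ℕ} (ha : x.Maximal a) :
    ProducesWith (x.restrict (x.carrier.erase a)) x a :=
  ⟨Finset.notMem_erase a _, (Finset.insert_erase ha.1).symm, ha,
    fun _ _ hu hv => ⟨fun huv => ⟨huv, hu, hv⟩, And.left⟩⟩

theorem IsStem.productOf {z x : Causet} (h : z.IsStem x) : z.ProductOf x := by
  induction hn : x.carrier.card using Nat.strong_induction_on generalizing x with
  | _ n ih =>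
    by_cases hxz : x.carrier ⊆ z.carrier
    · rw [h.eq_of_carrier_subset hxz]
      exact Relation.ReflTransGen.refl
    obtain ⟨a, ha, hmax⟩ := x.exists_maximal_of_nonempty (s := ↑(x.carrier \ z.carrier))
      (Finset.coe_nonempty.2 (Finset.sdiff_nonempty.2 hxz))
    obtain ⟨hax, haz⟩ := Finset.mem_sdiff.1 ha
    have hmaxa : x.Maximal a := ⟨hax, fun b hab => hmax b (Finset.mem_sdiff.2
      ⟨(x.rel_mem a b hab).2, fun hbz => haz (h.mem_of_rel b hbz a hab)⟩) hab⟩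
    have hzx' : z.IsStem (x.restrict (x.carrier.erase a)) :=
      h.restrict fun u hu =>
        Finset.mem_erase.2 ⟨fun hua => haz (hua ▸ hu), h.carrier_subset hu⟩
    exact .tail (ih _ (hn ▸ Finset.card_erase_lt_of_mem hax) hzx' rfl)
      ⟨a, producesWith_restrict_erase hmaxa⟩

theorem productOf_iff_isStem {z x : Causet} : z.ProductOf x ↔ z.IsStem x :=
  ⟨ProductOf.isStem, IsStem.productOf⟩

theorem exists_isTwoAntichain_productOf_iff (x : Causet) :
    (∃ z : Causet, z.IsTwoAntichain ∧ z.ProductOf x) ↔ x.TwoMinimal := by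
  simp only [productOf_iff_isStem]
  constructor
  · rintro ⟨z, ⟨a, b, hab, hcar, hanti⟩, hz⟩
    exact ⟨a, b, hab, hz.minimal ⟨by simp [hcar], fun v => hanti v a⟩,
      hz.minimal ⟨by simp [hcar], fun v => hanti v b⟩⟩
  · rintro ⟨a, b, hab, ha, hb⟩
    have hmin : ∀ u ∈ ({a, b} : Finset ℕ), x.Minimal u := by
      simpa using ⟨ha, hb⟩
    refine ⟨x.restrict {a, b}, ⟨a, b, hab, rfl, fun u v huv => (hmin v huv.2.2).2 u huv.1⟩,
      isStem_restrict (fun u hu => (hmin u hu).1) fun u hu v hvu => ((hmin u hu).2 v hvu).elim⟩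

theorem exists_isTwoChain_productOf_iff (x : Causet) :
    (∃ z : Causet, z.IsTwoChain ∧ z.ProductOf x) ↔ ∃ a, x.MinWithSPC a := by
  simp only [productOf_iff_isStem]
  constructor
  · rintro ⟨z, ⟨p, q, hpq, hcar, hzpq, hchain⟩, hz⟩
    have hp : p ∈ z.carrier := by simp [hcar]
    have hq : q ∈ z.carrier := by simp [hcar]
    refine ⟨p, hz.minimal ⟨hp, fun v hvp => hpq (hchain v p hvp).2⟩, q,
      ⟨(hz.rel_iff p hp q hq).1 hzpq, fun e ⟨hpe, heq⟩ => ?_⟩, fun d hd => ?_⟩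
    · have hez := (hz.rel_iff_right hq e).2 heq
      obtain rfl := (hchain e q hez).1
      exact x.irrefl e hpe
    · exact (hchain d q ((hz.rel_iff_right hq d).2 hd.1)).1
  · rintro ⟨a, ha, c, ⟨hac, -⟩, huniq⟩
    refine ⟨x.restrict {a, c}, ⟨a, c, fun h => x.irrefl a (h ▸ hac), rfl,
      ⟨hac, by simp, by simp⟩, fun u v ⟨huv, hu, hv⟩ => ?_⟩, isStem_restrict ?_ ?_⟩
    · simp only [Finset.mem_insert, Finset.mem_singleton] at hu hv
      rcases hu with rfl | rfl <;> rcases hv with rfl | rfl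
      exacts [(x.irrefl _ huv).elim, ⟨rfl, rfl⟩, (ha.2 _ huv).elim, (x.irrefl _ huv).elim]
    · simpa [Finset.insert_subset_iff] using ⟨ha.1, (x.rel_mem a c hac).2⟩
    · intro u hu v hvu
      simp only [Finset.mem_insert, Finset.mem_singleton] at hu ⊢
      rcases hu with rfl | rfl
      · exact (ha.2 v hvu).elim
      · obtain ⟨d, hd, hvd⟩ := exists_parent_of_rel hvu
        obtain rfl := huniq d hd
        exact .inl (hvd.resolve_right (ha.2 v))

end Causet

theorem stmt4_general (x : Causet) :
    ((∃ z : Causet, z.IsTwoAntichain ∧ z.ProductOf x) ∧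
      ¬ (∃ z : Causet, z.IsTwoChain ∧ z.ProductOf x)) ↔
    (Causet.TwoMinimal x ∧ ∀ a, x.Minimal a → ¬ ∃ c, x.Parent a c ∧ ∀ d, x.Parent d c → d = a) := by
  rw [x.exists_isTwoAntichain_productOf_iff, x.exists_isTwoChain_productOf_iff]
  simp only [Causet.MinWithSPC, not_exists, not_and]

/-- A finite poset `x` with `|x| ≥ 2` is a pure matter causet (a product
of the 2-element antichain but not of the 2-element chain) iff `x` has at least two
minimal vertices and no minimal vertex of `x` has a single-parent child. -/
theorem stmt4 (x : Causet) (hx : 2 ≤ x.carrier.card) :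
    ((∃ z : Causet, z.IsTwoAntichain ∧ z.ProductOf x) ∧
      ¬ (∃ z : Causet, z.IsTwoChain ∧ z.ProductOf x)) ↔
    (Causet.TwoMinimal x ∧ ∀ a, x.Minimal a → ¬ ∃ c, x.Parent a c ∧ ∀ d, x.Parent d c → d = a) :=
  stmt4_general x
end

section
/- If x is a pure matter causet (at least two minimal vertices, none with a single-parent child) with exactly m minimal vertices, then x produces exactly m mixed offspring counted with multiplicity: the mixed offspring of x are exactly those obtained by adjoining a new element whose unique parent is one of the m minimal vertices. -/
namespace Causet

lemma ext' {x y : Causet} (hc : x.carrier = y.carrier) (hr : x.rel = y.rel) : x = y := by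
  cases x; cases y; cases hc; cases hr; rfl

/-- adjoin `a` above the minimal vertex `b` only -/
def addAbove (x : Causet) (a b : ℕ) (ha : a ∉ x.carrier) (hbmem : b ∈ x.carrier)
    (hbmin : ∀ c, ¬ x.rel c b) : Causet where
  carrier := insert a x.carrier
  rel u v := x.rel u v ∨ (u = b ∧ v = a)
  rel_mem := by
    rintro u v (h | ⟨rfl, rfl⟩)
    · have := x.rel_mem u v h
      exact ⟨Finset.mem_insert_of_mem this.1, Finset.mem_insert_of_mem this.2⟩
    · exact ⟨Finset.mem_insert_of_mem hbmem, Finset.mem_insert_self _ _⟩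
  irrefl := by
    rintro u (h | ⟨rfl, rfl⟩)
    · exact x.irrefl u h
    · exact ha hbmem
  trans := by
    rintro u v w (h1 | ⟨rfl, rfl⟩) (h2 | ⟨rfl, rfl⟩)
    · exact Or.inl (x.trans _ _ _ h1 h2)
    · exact absurd h1 (hbmin u)
    · exact absurd ((x.rel_mem _ _ h2).1) ha
    · exact absurd hbmem ha

lemma addAbove_produces (x : Causet) (a b : ℕ) (ha : a ∉ x.carrier) (hbmem : b ∈ x.carrier)
    (hbmin : ∀ c, ¬ x.rel c b) : x.ProducesWith (x.addAbove a b ha hbmem hbmin) a := by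
  refine ⟨ha, rfl, ⟨Finset.mem_insert_self _ _, ?_⟩, ?_⟩
  · rintro v (h | ⟨rfl, rfl⟩)
    · exact ha (x.rel_mem _ _ h).1
    · exact ha hbmem
  · intro u v hu hv
    constructor
    · rintro (h | ⟨rfl, rfl⟩)
      · exact h
      · exact absurd hv ha
    · exact Or.inl

lemma addAbove_parent (x : Causet) (a b : ℕ) (ha : a ∉ x.carrier) (hbmem : b ∈ x.carrier)
    (hbmin : ∀ c, ¬ x.rel c b) :
    (x.addAbove a b ha hbmem hbmin).Parent b a ∧
      ∀ c, (x.addAbove a b ha hbmem hbmin).Parent c a → c = b := by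
  constructor
  · refine ⟨Or.inr ⟨rfl, rfl⟩, ?_⟩
    rintro c ⟨h1, h2⟩
    rcases h2 with h2 | ⟨rfl, -⟩
    · exact ha (x.rel_mem _ _ h2).2
    · rcases h1 with h1 | ⟨-, h1'⟩
      · exact x.irrefl _ h1
      · exact ha (h1' ▸ hbmem)
  · rintro c ⟨h1, -⟩
    rcases h1 with h1 | ⟨rfl, -⟩
    · exact absurd (x.rel_mem _ _ h1).2 ha
    · rfl

/-- any minimal vertex of `x` stays minimal after adjoining `a` -/
lemma min_stays (x y : Causet) (a : ℕ) (hp : x.ProducesWith y a) (b : ℕ)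
    (hb : x.Minimal b) : y.Minimal b := by
  obtain ⟨ha, hcar, ⟨hamem, hamax⟩, hrestr⟩ := hp
  refine ⟨by rw [hcar]; exact Finset.mem_insert_of_mem hb.1, ?_⟩
  intro c hc
  have hcmem : c ∈ y.carrier := (y.rel_mem _ _ hc).1
  rw [hcar] at hcmem
  rcases Finset.mem_insert.1 hcmem with rfl | hcx
  · exact hamax b hc
  · exact hb.2 c ((hrestr c b hcx hb.1).1 hc)

/-- everything strictly below `a` equals its unique parent `b`, when `b` is minimal -/
lemma below_eq (y : Causet) (a b : ℕ) (hbmin : ∀ c, ¬ y.rel c b)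
    (huniq : ∀ c, y.Parent c a → c = b) : ∀ u, y.rel u a → u = b := by
  classical
  have main : ∀ n u, (y.carrier.filter (fun v => y.rel u v)).card ≤ n → y.rel u a → u = b := by
    intro n
    induction n with
    | zero =>
      intro u hcard hua
      exfalso
      have hamem : a ∈ y.carrier.filter (fun v => y.rel u v) :=
        Finset.mem_filter.2 ⟨(y.rel_mem _ _ hua).2, hua⟩
      have := Finset.card_pos.2 ⟨a, hamem⟩
      omega
    | succ n ih =>
      intro u hcard hua
      by_cases hp : y.Parent u a
      · exact huniq u hp
      · have : ∃ c, y.rel u c ∧ y.rel c a := by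
          by_contra hc
          push_neg at hc
          exact hp ⟨hua, fun c hcc => hc c hcc.1 hcc.2⟩
        obtain ⟨c, huc, hca⟩ := this
        have hsub : (y.carrier.filter (fun v => y.rel c v)) ⊆
            (y.carrier.filter (fun v => y.rel u v)).erase c := by
          intro v hv
          rcases Finset.mem_filter.1 hv with ⟨hv1, hv2⟩
          refine Finset.mem_erase.2 ⟨?_, Finset.mem_filter.2 ⟨hv1, y.trans _ _ _ huc hv2⟩⟩
          rintro rfl; exact y.irrefl _ hv2
        have hcmem : c ∈ y.carrier.filter (fun v => y.rel u v) :=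
          Finset.mem_filter.2 ⟨(y.rel_mem _ _ huc).2, huc⟩
        have hcard' : (y.carrier.filter (fun v => y.rel c v)).card ≤ n := by
          have h1 := Finset.card_le_card hsub
          have h2 := Finset.card_erase_of_mem hcmem
          omega
        have := ih c hcard' hca
        subst this
        exact absurd huc (hbmin u)
  exact fun u => main _ u le_rfl

lemma mixed_forward (x y : Causet) (a : ℕ) (hp : x.ProducesWith y a)
    (hns : ∀ b, x.Minimal b → ¬ ∃ c, x.Parent b c ∧ ∀ d, x.Parent d c → d = b)
    (hm : y.Mixed) : ∃ b, x.Minimal b ∧ y.Parent b a ∧ ∀ c, y.Parent c a → c = b := by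
  obtain ⟨-, m, hmmin, c, hmc, huniq⟩ := hm
  obtain ⟨ha, hcar, ⟨hamem, hamax⟩, hrestr⟩ := hp
  have hmne : m ≠ a := by rintro rfl; exact hamax c hmc.1
  have hmx : m ∈ x.carrier := by
    have := hmmin.1; rw [hcar] at this
    rcases Finset.mem_insert.1 this with h | h
    · exact absurd h hmne
    · exact h
  have hminx : x.Minimal m := by
    refine ⟨hmx, fun u hu => hmmin.2 u ?_⟩
    exact (hrestr u m (x.rel_mem _ _ hu).1 hmx).2 hu
  by_cases hca : c = a
  · subst hca
    exact ⟨m, hminx, hmc, huniq⟩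
  · exfalso
    have hcx : c ∈ x.carrier := by
      have := (y.rel_mem _ _ hmc.1).2; rw [hcar] at this
      rcases Finset.mem_insert.1 this with h | h
      · exact absurd h hca
      · exact h
    refine hns m hminx ⟨c, ⟨(hrestr m c hmx hcx).1 hmc.1, ?_⟩, ?_⟩
    · rintro d ⟨h1, h2⟩
      have hd := (x.rel_mem _ _ h1).2
      exact hmc.2 d ⟨(hrestr m d hmx hd).2 h1, (hrestr d c hd hcx).2 h2⟩
    · rintro d ⟨h1, h2⟩
      have hdx := (x.rel_mem _ _ h1).1
      refine huniq d ⟨(hrestr d c hdx hcx).2 h1, ?_⟩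
      rintro e ⟨he1, he2⟩
      have hemem := (y.rel_mem _ _ he1).2
      rw [hcar] at hemem
      rcases Finset.mem_insert.1 hemem with rfl | hex
      · exact hamax c he2
      · exact h2 e ⟨(hrestr d e hdx hex).1 he1, (hrestr e c hex hcx).1 he2⟩

lemma mixed_backward (x y : Causet) (a : ℕ) (hp : x.ProducesWith y a)
    (h2 : x.TwoMinimal) (b : ℕ) (hb : x.Minimal b) (hpar : y.Parent b a)
    (huniq : ∀ c, y.Parent c a → c = b) : y.Mixed := by
  obtain ⟨p, q, hne, hpmin, hqmin⟩ := h2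
  exact ⟨⟨p, q, hne, min_stays x y a hp p hpmin, min_stays x y a hp q hqmin⟩,
    b, min_stays x y a hp b hb, a, hpar, huniq⟩

end Causet

/-- If `x` is a pure matter causet (at least two minimal vertices, none with
a single-parent child), then for any fresh label `a`, the mixed offspring of `x` are
exactly those obtained by adjoining `a` with unique parent one of the minimal vertices of
`x`, and the mixed offspring (counted with multiplicity, i.e. as labelled extensions)
are in bijection with the minimal vertices of `x`. -/
theorem stmt6 (x : Causet) (h2 : Causet.TwoMinimal x)
    (hns : ∀ b, x.Minimal b → ¬ ∃ c, x.Parent b c ∧ ∀ d, x.Parent d c → d = b)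
    (a : ℕ) (ha : a ∉ x.carrier) :
    (∀ y, x.ProducesWith y a →
        (y.Mixed ↔ ∃ b, x.Minimal b ∧ y.Parent b a ∧ ∀ c, y.Parent c a → c = b)) ∧
    ∃ e : {b // x.Minimal b} ≃ {y : Causet // x.ProducesWith y a ∧ y.Mixed},
      ∀ b : {b // x.Minimal b}, (e b).1.Parent b.1 a := by
  classical
  have part1 : ∀ y, x.ProducesWith y a →
      (y.Mixed ↔ ∃ b, x.Minimal b ∧ y.Parent b a ∧ ∀ c, y.Parent c a → c = b) := by
    intro y hp
    constructor
    · exact fun hm => Causet.mixed_forward x y a hp hns hm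
    · rintro ⟨b, hb, hpar, huniq⟩
      exact Causet.mixed_backward x y a hp h2 b hb hpar huniq
  refine ⟨part1, ?_⟩
  set f : {b // x.Minimal b} → {y : Causet // x.ProducesWith y a ∧ y.Mixed} :=
    fun b => ⟨x.addAbove a b.1 ha b.2.1 b.2.2,
      Causet.addAbove_produces x a b.1 ha b.2.1 b.2.2,
      Causet.mixed_backward x _ a (Causet.addAbove_produces x a b.1 ha b.2.1 b.2.2) h2 b.1 b.2
        (Causet.addAbove_parent x a b.1 ha b.2.1 b.2.2).1
        (Causet.addAbove_parent x a b.1 ha b.2.1 b.2.2).2⟩ with hf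
  have hinj : Function.Injective f := by
    rintro ⟨b, hb⟩ ⟨b', hb'⟩ hEq
    have hrel : (x.addAbove a b ha hb.1 hb.2).rel = (x.addAbove a b' ha hb'.1 hb'.2).rel := by
      have := congrArg (fun z => z.1.rel) hEq
      exact this
    have h1 : (x.addAbove a b ha hb.1 hb.2).rel b a := Or.inr ⟨rfl, rfl⟩
    rw [hrel] at h1
    rcases h1 with h | ⟨rfl, -⟩
    · exact absurd (x.rel_mem _ _ h).2 ha
    · rfl
  have hsurj : Function.Surjective f := by
    rintro ⟨y, hp, hm⟩
    obtain ⟨b, hb, hpar, huniq⟩ := (part1 y hp).1 hm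
    refine ⟨⟨b, hb⟩, ?_⟩
    have hbminy : ∀ c, ¬ y.rel c b := (Causet.min_stays x y a hp b hb).2
    have hbelow := Causet.below_eq y a b hbminy huniq
    obtain ⟨ha', hcar, ⟨hamem, hamax⟩, hrestr⟩ := hp
    refine Subtype.ext (Causet.ext' ?_ ?_)
    · exact hcar.symm
    · funext u v
      apply propext
      constructor
      · rintro (h | ⟨rfl, rfl⟩)
        · exact (hrestr u v (x.rel_mem _ _ h).1 (x.rel_mem _ _ h).2).2 h
        · exact hpar.1
      · intro h
        have hu : u ∈ y.carrier := (y.rel_mem _ _ h).1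
        have hv : v ∈ y.carrier := (y.rel_mem _ _ h).2
        rw [hcar] at hu hv
        rcases Finset.mem_insert.1 hu with rfl | hux
        · exact absurd h (hamax v)
        rcases Finset.mem_insert.1 hv with rfl | hvx
        · exact Or.inr ⟨hbelow u h, rfl⟩
        · exact Or.inl ((hrestr u v hux hvx).1 h)
  refine ⟨Equiv.ofBijective f ⟨hinj, hsurj⟩, ?_⟩
  intro b
  exact (Causet.addAbove_parent x a b.1 ha b.2.1 b.2.2).1
end
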